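/- arXiv:1001.2164 — 7 statements merged into one kernel-verified Lean document; each statement's English description precedes it below -/
import Mathlib

section
/- Let F and G be m×n matrices over 𝔽₂ and let α ≤ m be a nonnegative integer such that F and G agree in their first m − α rows. Then rank(F) − dim(range(F) ∩ range(G)) ≤ min(n, α). -/
/-!
Since `F = G + (F - G)`, the range of `F` lies in `range G ⊔ range (F - G)`, so the dimension
formula for `range F ⊓ range G` bounds `rank F - dim (range F ∩ range G)` by `rank (F - G)`.
The matrix `F - G` vanishes outside its last `α` rows, hence has rank at most `α`; and trivially
the left-hand side is at most `rank F ≤ n`.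
-/

open Module Finset

theorem Submodule.finrank_sub_finrank_inf_le_of_le_sup {K V : Type*} [Field K] [AddCommGroup V]
    [Module K V] [FiniteDimensional K V] {p q r : Submodule K V} (h : p ≤ q ⊔ r) :
    finrank K p - finrank K ↥(p ⊓ q) ≤ finrank K r := by
  have hdim := Submodule.finrank_sup_add_finrank_inf_eq p q
  have hmono : finrank K ↥(p ⊔ q) ≤ finrank K ↥(q ⊔ r) :=
    Submodule.finrank_mono (sup_le h le_sup_left)
  have hsup := Submodule.finrank_add_le_finrank_add_finrank q r
  omega

theorem Submodule.finrank_le_card_of_apply_eq_zero {K ι : Type*} [Field K]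
    (p : Submodule K (ι → K)) (s : Finset ι) (h : ∀ v ∈ p, ∀ i ∉ s, v i = 0) :
    finrank K p ≤ #s := by
  have hinj : Function.Injective (LinearMap.funLeft K K ((↑) : s → ι) ∘ₗ p.subtype) := by
    rw [← LinearMap.ker_eq_bot, LinearMap.ker_eq_bot']
    rintro ⟨v, hv⟩ hzero
    ext i
    by_cases hi : i ∈ s
    · exact congrFun hzero ⟨i, hi⟩
    · exact h v hv i hi
  simpa using LinearMap.finrank_le_finrank_of_injective hinj

theorem Matrix.rank_le_card_of_row_eq_zero {K m n : Type*} [Field K] [Fintype n]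
    (A : Matrix m n K) (s : Finset m) (h : ∀ i ∉ s, ∀ j, A i j = 0) : A.rank ≤ #s :=
  Submodule.finrank_le_card_of_apply_eq_zero _ s <| by
    rintro _ ⟨x, rfl⟩ i hi
    simp [Matrix.mulVec, dotProduct, h i hi]

theorem Matrix.range_mulVecLin_le_sup_sub {R m n : Type*} [CommRing R] [Fintype n]
    (F G : Matrix m n R) :
    LinearMap.range F.mulVecLin ≤ LinearMap.range G.mulVecLin ⊔ LinearMap.range (F - G).mulVecLin :=
  calc LinearMap.range F.mulVecLin = LinearMap.range (G + (F - G)).mulVecLin := by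
        rw [add_sub_cancel]
    _ ≤ _ := by
        rw [Matrix.mulVecLin_add]
        exact LinearMap.range_add_le _ _

theorem Fin.card_filter_not_val_lt_sub_le (m α : ℕ) : #{i : Fin m | ¬(i : ℕ) < m - α} ≤ α := by
  rw [filter_not, card_sdiff_of_subset (filter_subset _ _), Fin.card_filter_val_lt, card_univ,
    Fintype.card_fin]
  omega

theorem rank_sub_dim_inter_le_of_agree_first_rows_general
    (m n α : ℕ)
    (F G : Matrix (Fin m) (Fin n) (ZMod 2))
    (hagree : ∀ i : Fin m, (i : ℕ) < m - α → ∀ j : Fin n, F i j = G i j) :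
    F.rank - Module.finrank (ZMod 2)
        ↥(LinearMap.range F.mulVecLin ⊓ LinearMap.range G.mulVecLin)
      ≤ min n α := by
  have hdiff : (F - G).rank ≤ α := by
    refine ((F - G).rank_le_card_of_row_eq_zero {i | ¬(i : ℕ) < m - α} fun i hi j => ?_).trans
      (Fin.card_filter_not_val_lt_sub_le m α)
    simp only [mem_filter, mem_univ, true_and, not_not] at hi
    simp [hagree i hi j]
  exact le_min ((Nat.sub_le _ _).trans F.rank_le_width)
    ((Submodule.finrank_sub_finrank_inf_le_of_le_sup (F.range_mulVecLin_le_sup_sub G)).trans hdiff)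

/-- If `F` and `G` agree on their first `m - α` rows, then
`rank F - dim (range F ∩ range G) ≤ min n α`. -/
theorem rank_sub_dim_inter_le_of_agree_first_rows
    (m n α : ℕ) (hα : α ≤ m)
    (F G : Matrix (Fin m) (Fin n) (ZMod 2))
    (hagree : ∀ i : Fin m, (i : ℕ) < m - α → ∀ j : Fin n, F i j = G i j) :
    F.rank - Module.finrank (ZMod 2)
        ↥(LinearMap.range F.mulVecLin ⊓ LinearMap.range G.mulVecLin)
      ≤ min n α :=
  rank_sub_dim_inter_le_of_agree_first_rows_general m n α F G hagree
end

section
/- Let G_S and G_M be q×q matrices over 𝔽₂, regarded as linear maps on 𝔽₂^q. The maximum dimension of a subspace X ⊆ 𝔽₂^q such that the restriction of G_S to X is injective and {G_S x : x ∈ X} ∩ range(G_M) = {0} equals rank(G_S) − dim(range(G_S) ∩ range(G_M)). -/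
open Module Submodule LinearMap

lemma finrank_map_of_injOn {K V W : Type*} [Field K] [AddCommGroup V] [Module K V]
    [AddCommGroup W] [Module K W] (f : V →ₗ[K] W) (X : Submodule K V)
    (h : Set.InjOn f (X : Set V)) :
    Module.finrank K (X.map f) = Module.finrank K X := by
  have hinj : Function.Injective (f.domRestrict X) := by
    rintro ⟨x, hx⟩ ⟨y, hy⟩ hxy
    exact Subtype.ext (h hx hy hxy)
  have := LinearMap.finrank_range_of_inj hinj
  rwa [LinearMap.range_domRestrict] at this

/-- The maximum dimension of a subspace `X` on which `G_S` is injective and whose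
image under `G_S` intersects `range G_M` trivially equals
`rank G_S - dim (range G_S ∩ range G_M)`. -/
theorem max_dim_code_subspace
    (q : ℕ) (GS GM : Matrix (Fin q) (Fin q) (ZMod 2)) :
    IsGreatest
      {d : ℕ | ∃ X : Submodule (ZMod 2) (Fin q → ZMod 2),
        Set.InjOn (⇑GS.mulVecLin) (X : Set (Fin q → ZMod 2)) ∧
        X.map GS.mulVecLin ⊓ LinearMap.range GM.mulVecLin = ⊥ ∧
        Module.finrank (ZMod 2) X = d}
      (GS.rank - Module.finrank (ZMod 2)
        ↥(LinearMap.range GS.mulVecLin ⊓ LinearMap.range GM.mulVecLin)) := by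
  set f := GS.mulVecLin
  set S := LinearMap.range f with hS
  set M := LinearMap.range GM.mulVecLin
  set I := S ⊓ M with hI
  have hrank : GS.rank = finrank (ZMod 2) S := rfl
  have hIS : I ≤ S := inf_le_left
  have hfinI : finrank (ZMod 2) I ≤ finrank (ZMod 2) S := Submodule.finrank_mono hIS
  constructor
  · -- membership: construct the subspace
    obtain ⟨K', hK'⟩ := Submodule.exists_isCompl (LinearMap.ker f)
    obtain ⟨W', hW'⟩ := Submodule.exists_isCompl (I.comap S.subtype)
    set W : Submodule (ZMod 2) (Fin q → ZMod 2) := W'.map S.subtype with hW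
    have hWS : W ≤ S := Submodule.map_subtype_le S W'
    have hWI : W ⊓ I = ⊥ := by
      rw [eq_bot_iff]
      rintro x ⟨hxW, hxI⟩
      obtain ⟨⟨y, hyS⟩, hyW', rfl⟩ := hxW
      have : (⟨y, hyS⟩ : S) ∈ I.comap S.subtype ⊓ W' := ⟨hxI, hyW'⟩
      rw [hW'.inf_eq_bot] at this
      simpa using congrArg (S.subtype) this
    have hWIsup : W ⊔ I = S := by
      apply le_antisymm (sup_le hWS hIS)
      intro x hx
      have hmem : (⟨x, hx⟩ : S) ∈ I.comap S.subtype ⊔ W' := by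
        rw [hW'.sup_eq_top]; trivial
      obtain ⟨a, ha, b, hb, hab⟩ := Submodule.mem_sup.mp hmem
      have hx' : x = (a : Fin q → ZMod 2) + b := by
        simpa using congrArg (S.subtype) hab.symm
      rw [hx']
      exact Submodule.mem_sup.mpr ⟨b, ⟨b, hb, rfl⟩, a, ha, (add_comm _ _)⟩
    have hfinW : finrank (ZMod 2) W = finrank (ZMod 2) S - finrank (ZMod 2) I := by
      have h1 := Submodule.finrank_sup_add_finrank_inf_eq W I
      rw [hWIsup, hWI] at h1
      simp only [finrank_bot, add_zero] at h1
      omega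
    set X := (Submodule.comap f W) ⊓ K' with hX
    have hinj : Set.InjOn f (X : Set (Fin q → ZMod 2)) := by
      intro x hx y hy hxy
      have : x - y ∈ LinearMap.ker f ⊓ K' :=
        ⟨by simp [LinearMap.mem_ker, map_sub, hxy], Submodule.sub_mem _ hx.2 hy.2⟩
      rw [hK'.inf_eq_bot] at this
      simpa [sub_eq_zero] using this
    have hmap : X.map f = W := by
      apply le_antisymm
      · rintro _ ⟨x, ⟨hxW, -⟩, rfl⟩; exact hxW
      · intro w hw
        obtain ⟨x, rfl⟩ := hWS hw
        have : x ∈ LinearMap.ker f ⊔ K' := by rw [hK'.sup_eq_top]; trivial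
        obtain ⟨a, ha, b, hb, rfl⟩ := Submodule.mem_sup.mp this
        have hfb : f b = f (a + b) := by
          simp [map_add, LinearMap.mem_ker.mp ha]
        refine ⟨b, ⟨?_, hb⟩, hfb⟩
        show f b ∈ W
        rw [hfb]; exact hw
    refine ⟨X, hinj, ?_, ?_⟩
    · rw [hmap, eq_bot_iff]
      rintro x ⟨hxW, hxM⟩
      have : x ∈ W ⊓ I := ⟨hxW, hWS hxW, hxM⟩
      rw [hWI] at this; exact this
    · rw [hrank, ← hfinW, ← hmap, finrank_map_of_injOn f X hinj]
  · -- upper bound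
    rintro d ⟨X, hinj, hdisj, rfl⟩
    have hY := finrank_map_of_injOn f X hinj
    set Y := X.map f with hYdef
    have hYS : Y ≤ S := Submodule.map_le_iff_le_comap.mpr (fun x _ => ⟨x, rfl⟩)
    have hYI : Y ⊓ I = ⊥ := by
      rw [eq_bot_iff]; rintro x ⟨hx1, -, hx2⟩
      rw [← hdisj]; exact ⟨hx1, hx2⟩
    have h1 := Submodule.finrank_sup_add_finrank_inf_eq Y I
    rw [hYI] at h1
    simp only [finrank_bot, add_zero] at h1
    have h2 : finrank (ZMod 2) ↥(Y ⊔ I) ≤ finrank (ZMod 2) S :=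
      Submodule.finrank_mono (sup_le hYS hIS)
    rw [hrank]
    omega
end

section
/- Let n1, n2, n3, n4, m be nonnegative integers with n1 > n2, n3 ≥ n4, and m ≤ n1; let q = max(n1, n2, n3, n4, m) and let Q be the q×q shift matrix over 𝔽₂. Then there exist q×q matrices G_A, G_B over 𝔽₂ such that, with G_S = Q^{q−n3} G_A Q^{q−n1} + Q^{q−n4} G_B Q^{q−n2} and G_M = Q^{q−n3} G_A Q^{q−m} + Q^{q−n4} G_B Q^{q−m}, one has G_M = 0 and rank(G_S) − dim(range(G_S) ∩ range(G_M)) = min(n1 − m + min(m, n4), n3). -/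
/-!
Put `d = n1 - n2 ≥ 1` and `G_A = Q^(n3-n4) G_B + X`. In characteristic two the two `G_B`-terms of
`G_M` cancel, so `G_M = Q^(q-n3) X Q^(q-m)`, while
`G_S = (Q^(q-n4) G_B (1 + Q^d) + Q^(q-n3) X) Q^(q-n1)`. As `Q` is nilpotent, `1 + Q^d` is
invertible, so `G_S = Y Q^(q-n1)` and `G_M = 0` can be arranged for any `Y` whose first `q - m`
columns vanish above row `q - n3` and whose last `m` columns vanish above row `q - n4`.
A diagonal of `r = min (n1 - m + min m n4) n3` ones in the last `r` rows of `Y` satisfies this when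
its last one is in column `q - m + min m n4 - 1`; shifting it left by `q - n1` columns loses none
of its ones, so `rank G_S = r`.
-/

/-- The `q × q` lower shift matrix over `𝔽₂`: entry `(i, j)` is `1` iff `i = j + 1`. -/
def shiftQ (q : ℕ) : Matrix (Fin q) (Fin q) (ZMod 2) :=
  Matrix.of fun i j => if (i : ℕ) = (j : ℕ) + 1 then 1 else 0

/-- Source-to-destination transfer matrix
`G_S = Q^(q-n3) G_A Q^(q-n1) + Q^(q-n4) G_B Q^(q-n2)`. -/
def GSmat (q n1 n2 n3 n4 : ℕ) (GA GB : Matrix (Fin q) (Fin q) (ZMod 2)) :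
    Matrix (Fin q) (Fin q) (ZMod 2) :=
  shiftQ q ^ (q - n3) * GA * shiftQ q ^ (q - n1) +
    shiftQ q ^ (q - n4) * GB * shiftQ q ^ (q - n2)

/-- Interference transfer matrix
`G_M = Q^(q-n3) G_A Q^(q-m) + Q^(q-n4) G_B Q^(q-m)`. -/
def GMmat (q n3 n4 m : ℕ) (GA GB : Matrix (Fin q) (Fin q) (ZMod 2)) :
    Matrix (Fin q) (Fin q) (ZMod 2) :=
  shiftQ q ^ (q - n3) * GA * shiftQ q ^ (q - m) +
    shiftQ q ^ (q - n4) * GB * shiftQ q ^ (q - m)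

/-- The achievable rate `rank G_S - dim (range G_S ∩ range G_M)` of a linear scheme. -/
noncomputable def linRate (q : ℕ) (GS GM : Matrix (Fin q) (Fin q) (ZMod 2)) : ℕ :=
  GS.rank - Module.finrank (ZMod 2)
    ↥(LinearMap.range GS.mulVecLin ⊓ LinearMap.range GM.mulVecLin)

open Matrix

namespace Matrix

variable {K m n ι : Type*}

theorem add_self_eq_zero {R : Type*} [Semiring R] [CharP R 2] (M : Matrix m n R) :
    M + M = 0 := by
  ext i j
  exact CharTwo.add_self_eq_zero (M i j)

variable [Field K] [Fintype m] [Fintype n] [Fintype ι]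

theorem rank_le_card_of_row_eq_zero_s8 (A : Matrix m n K) (f : ι → m)
    (hA : ∀ i, i ∉ Set.range f → A i = 0) : A.rank ≤ Fintype.card ι := by
  classical
  let s := Finset.univ.image f
  let w : m → K := fun i => if i ∈ s then 1 else 0
  have hdiag : diagonal w * A = A := by
    ext i j
    by_cases hi : i ∈ s
    · simp [w, diagonal_mul, hi]
    · have hi' : i ∉ Set.range f := by simpa [s] using hi
      simp [w, diagonal_mul, hi, congrFun (hA i hi') j]
  calc A.rank = (diagonal w * A).rank := by rw [hdiag]
    _ ≤ (diagonal w).rank := rank_mul_le_left _ _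
    _ = s.card := by rw [rank_diagonal]; simp [w, Fintype.card_subtype]
    _ ≤ Fintype.card ι := Finset.card_image_le

theorem rank_eq_card_of_submatrix_eq_one [DecidableEq ι] (A : Matrix m n K)
    (f : ι → m) (g : ι → n) (hA : ∀ i, i ∉ Set.range f → A i = 0)
    (hfg : A.submatrix f g = 1) :
    A.rank = Fintype.card ι :=
  le_antisymm (rank_le_card_of_row_eq_zero_s8 A f hA)
    (by simpa [hfg] using rank_submatrix_le A f g)

end Matrix

section ShiftMatrix

variable {q : ℕ}

lemma mul_shiftQ_apply (M : Matrix (Fin q) (Fin q) (ZMod 2)) (i j : Fin q) :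
    (M * shiftQ q) i j = if h : (j : ℕ) + 1 < q then M i ⟨j + 1, h⟩ else 0 := by
  simp only [mul_apply, shiftQ, of_apply, mul_ite, mul_one, mul_zero]
  split_ifs with h
  · rw [Fintype.sum_eq_single ⟨j + 1, h⟩ fun k hk => if_neg fun hk' => hk (Fin.ext hk'),
      if_pos rfl]
  · exact Finset.sum_eq_zero fun k _ => if_neg fun hk => h (by have := k.isLt; omega)

lemma shiftQ_mul_apply (M : Matrix (Fin q) (Fin q) (ZMod 2)) (i j : Fin q) :
    (shiftQ q * M) i j = if h : 1 ≤ (i : ℕ) then M ⟨i - 1, by omega⟩ j else 0 := by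
  simp only [mul_apply, shiftQ, of_apply, ite_mul, one_mul, zero_mul]
  split_ifs with h
  · rw [Fintype.sum_eq_single ⟨i - 1, by omega⟩
      fun k hk => if_neg fun hk' => hk (Fin.ext (by dsimp only; omega)),
      if_pos (by dsimp only; omega)]
  · exact Finset.sum_eq_zero fun k _ => if_neg (by omega)

lemma mul_shiftQ_pow_apply (M : Matrix (Fin q) (Fin q) (ZMod 2)) (k : ℕ) (i j : Fin q) :
    (M * shiftQ q ^ k) i j = if h : (j : ℕ) + k < q then M i ⟨j + k, h⟩ else 0 := by
  induction k generalizing j with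
  | zero => simp
  | succ k ih =>
    rw [pow_succ, ← Matrix.mul_assoc, mul_shiftQ_apply]
    split_ifs with h₁ h₂ h₂
    · rw [ih, dif_pos (by dsimp only; omega)]
      congr 2; dsimp only; omega
    · rw [ih, dif_neg (by dsimp only; omega)]
    · omega
    · rfl

lemma shiftQ_pow_mul_apply (M : Matrix (Fin q) (Fin q) (ZMod 2)) (k : ℕ) (i j : Fin q) :
    (shiftQ q ^ k * M) i j = if h : k ≤ (i : ℕ) then M ⟨i - k, by omega⟩ j else 0 := by
  induction k generalizing i with
  | zero => simp
  | succ k ih =>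
    rw [pow_succ', Matrix.mul_assoc, shiftQ_mul_apply]
    split_ifs with h₁ h₂ h₂
    · rw [ih, dif_pos (by dsimp only; omega)]
      congr 2; dsimp only; omega
    · rw [ih, dif_neg (by dsimp only; omega)]
    · omega
    · rfl

lemma shiftQ_pow_eq_zero {k : ℕ} (hk : q ≤ k) : shiftQ q ^ k = 0 := by
  ext i j
  rw [← Matrix.one_mul (shiftQ q ^ k), mul_shiftQ_pow_apply, dif_neg (by omega),
    Matrix.zero_apply]

lemma isNilpotent_shiftQ_pow {d : ℕ} (hd : d ≠ 0) : IsNilpotent (shiftQ q ^ d) :=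
  ⟨q, by
    rw [← pow_mul]
    exact shiftQ_pow_eq_zero (Nat.le_mul_of_pos_left q (Nat.pos_of_ne_zero hd))⟩

lemma exists_shiftQ_pow_mul_eq (M : Matrix (Fin q) (Fin q) (ZMod 2)) (k : ℕ)
    (hM : ∀ i j : Fin q, (i : ℕ) < k → M i j = 0) : ∃ N, shiftQ q ^ k * N = M := by
  refine ⟨of fun i j => if h : (i : ℕ) + k < q then M ⟨i + k, h⟩ j else 0, ?_⟩
  ext i j
  rw [shiftQ_pow_mul_apply]
  split_ifs with hi
  · simp only [of_apply, Nat.sub_add_cancel hi, dif_pos i.isLt]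
  · exact (hM i j (by omega)).symm

end ShiftMatrix

def diagBand (K : Type*) [Zero K] [One K] (q b a : ℕ) : Matrix (Fin q) (Fin q) K :=
  of fun i j => if b ≤ (i : ℕ) ∧ (i : ℕ) + a = j + b then 1 else 0

theorem rank_diagBand (K : Type*) [Field K] {q b a : ℕ} (hab : a ≤ b) :
    (diagBand K q b a).rank = q - b := by
  let f : Fin (q - b) → Fin q := fun k => ⟨b + k, by omega⟩
  let g : Fin (q - b) → Fin q := fun k => ⟨a + k, by omega⟩
  have hrow : ∀ i, i ∉ Set.range f → diagBand K q b a i = 0 := by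
    intro i hi
    ext j
    have hbi : ¬ b ≤ (i : ℕ) := fun hbi =>
      hi ⟨⟨i - b, by omega⟩, Fin.ext (by simp only [f]; omega)⟩
    simp [diagBand, hbi]
  have hone : (diagBand K q b a).submatrix f g = 1 := by
    ext k l
    simp only [diagBand, submatrix_apply, of_apply, one_apply, f, g, Fin.ext_iff]
    split_ifs <;> first | rfl | omega
  simpa using Matrix.rank_eq_card_of_submatrix_eq_one _ f g hrow hone

theorem diagBand_mul_shiftQ_pow {q b a c : ℕ} (h : a + c ≤ b) :
    diagBand (ZMod 2) q b (a + c) * shiftQ q ^ c = diagBand (ZMod 2) q b a := by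
  ext i j
  rw [mul_shiftQ_pow_apply]
  simp only [diagBand, of_apply]
  split_ifs <;> first | rfl | omega

section TransferMatrices

variable {q n1 n2 n3 n4 : ℕ}

theorem GMmat_shiftQ_pow_mul_add (m : ℕ) (h34 : n4 ≤ n3) (h3 : n3 ≤ q)
    (B X : Matrix (Fin q) (Fin q) (ZMod 2)) :
    GMmat q n3 n4 m (shiftQ q ^ (n3 - n4) * B + X) B =
      shiftQ q ^ (q - n3) * X * shiftQ q ^ (q - m) := by
  have hpow : shiftQ q ^ (q - n3) * shiftQ q ^ (n3 - n4) = shiftQ q ^ (q - n4) := by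
    rw [← pow_add]; congr 1; omega
  rw [GMmat, Matrix.mul_add, Matrix.add_mul, ← Matrix.mul_assoc, hpow, add_comm, ← add_assoc,
    Matrix.add_self_eq_zero, zero_add]

theorem GSmat_shiftQ_pow_mul_add (h12 : n2 ≤ n1) (h1 : n1 ≤ q) (h34 : n4 ≤ n3) (h3 : n3 ≤ q)
    (B X Z : Matrix (Fin q) (Fin q) (ZMod 2)) (hBZ : B * (1 + shiftQ q ^ (n1 - n2)) = Z) :
    GSmat q n1 n2 n3 n4 (shiftQ q ^ (n3 - n4) * B + X) B =
      (shiftQ q ^ (q - n4) * Z + shiftQ q ^ (q - n3) * X) * shiftQ q ^ (q - n1) := by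
  have hpow₃₄ : shiftQ q ^ (q - n3) * shiftQ q ^ (n3 - n4) = shiftQ q ^ (q - n4) := by
    rw [← pow_add]; congr 1; omega
  have hpow₁₂ : shiftQ q ^ (q - n2) = shiftQ q ^ (n1 - n2) * shiftQ q ^ (q - n1) := by
    rw [← pow_add]; congr 1; omega
  rw [GSmat, hpow₁₂, ← hBZ]
  simp only [Matrix.mul_add, Matrix.add_mul, Matrix.mul_one, ← Matrix.mul_assoc, hpow₃₄]
  abel

theorem exists_GMmat_eq_zero_and_GSmat_eq (m : ℕ) (h12 : n2 < n1)
    (h1 : n1 ≤ q) (h34 : n4 ≤ n3) (h3 : n3 ≤ q) (Y : Matrix (Fin q) (Fin q) (ZMod 2))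
    (hY₃ : ∀ i j : Fin q, (i : ℕ) < q - n3 → Y i j = 0)
    (hY₄ : ∀ i j : Fin q, (i : ℕ) < q - n4 → q - m ≤ (j : ℕ) → Y i j = 0) :
    ∃ GA GB, GMmat q n3 n4 m GA GB = 0 ∧
      GSmat q n1 n2 n3 n4 GA GB = Y * shiftQ q ^ (q - n1) := by
  let Y₃ : Matrix (Fin q) (Fin q) (ZMod 2) := of fun i j => if (j : ℕ) < q - m then Y i j else 0
  let Y₄ : Matrix (Fin q) (Fin q) (ZMod 2) := of fun i j => if (j : ℕ) < q - m then 0 else Y i j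
  obtain ⟨X, hX⟩ := exists_shiftQ_pow_mul_eq Y₃ (q - n3) fun i j hi => by
    simp [Y₃, hY₃ i j hi]
  obtain ⟨Z, hZ⟩ := exists_shiftQ_pow_mul_eq Y₄ (q - n4) fun i j hi => by
    by_cases hj : (j : ℕ) < q - m
    · simp [Y₄, hj]
    · simp [Y₄, hj, hY₄ i j hi (by omega)]
  obtain ⟨u, hu⟩ := (isNilpotent_shiftQ_pow (q := q) (Nat.sub_ne_zero_of_lt h12)).isUnit_one_add
  have hBZ : Z * u.inv * (1 + shiftQ q ^ (n1 - n2)) = Z := by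
    rw [← hu, Matrix.mul_assoc, u.inv_val, Matrix.mul_one]
  refine ⟨shiftQ q ^ (n3 - n4) * (Z * u.inv) + X, Z * u.inv, ?_, ?_⟩
  · rw [GMmat_shiftQ_pow_mul_add m h34 h3, hX]
    ext i j
    rw [mul_shiftQ_pow_apply]
    split_ifs <;> simp [Y₃]
  · rw [GSmat_shiftQ_pow_mul_add h12.le h1 h34 h3 _ X Z hBZ, hX, hZ]
    congr 1
    ext i j
    by_cases hj : (j : ℕ) < q - m <;> simp [Y₃, Y₄, hj]

theorem linRate_zero_right (GS : Matrix (Fin q) (Fin q) (ZMod 2)) :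
    linRate q GS 0 = GS.rank := by
  rw [linRate, mulVecLin_zero, LinearMap.range_zero, inf_bot_eq, finrank_bot, Nat.sub_zero]

end TransferMatrices

/-- Case `n1 > n2`, `n3 ≥ n4`, `m ≤ n1`: the upper bound is achievable with `G_M = 0`. -/
theorem rate_achievable_case1
    (n1 n2 n3 n4 m q : ℕ) (hq : q = max n1 (max n2 (max n3 (max n4 m))))
    (h12 : n2 < n1) (h34 : n4 ≤ n3) (hm : m ≤ n1) :
    ∃ GA GB : Matrix (Fin q) (Fin q) (ZMod 2),
      GMmat q n3 n4 m GA GB = 0 ∧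
      linRate q (GSmat q n1 n2 n3 n4 GA GB) (GMmat q n3 n4 m GA GB)
        = min (n1 - m + min m n4) n3 := by
  set e := n1 - m + min m n4
  set r := min e n3
  obtain ⟨GA, GB, hGM, hGS⟩ := exists_GMmat_eq_zero_and_GSmat_eq m h12 (by omega) h34 (by omega)
    (diagBand (ZMod 2) q (q - r) (e - r + (q - n1)))
    (fun i j hi => by simp only [diagBand, of_apply]; rw [if_neg (by omega)])
    (fun i j hi hj => by simp only [diagBand, of_apply]; rw [if_neg (by omega)])
  refine ⟨GA, GB, hGM, ?_⟩
  rw [hGM, linRate_zero_right, hGS, diagBand_mul_shiftQ_pow (by omega), rank_diagBand _ (by omega)]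
  omega
end

section
/- Let n1, n2, n3, n4, m be nonnegative integers with n1 > n2, n3 ≥ n4, and m ≥ n1; let q = max(n1, n2, n3, n4, m) and let Q be the q×q shift matrix over 𝔽₂. Then for every pair of q×q matrices G_A, G_B over 𝔽₂, with G_S = Q^{q−n3} G_A Q^{q−n1} + Q^{q−n4} G_B Q^{q−n2} and G_M = Q^{q−n3} G_A Q^{q−m} + Q^{q−n4} G_B Q^{q−m}, one has rank(G_S) − dim(range(G_S) ∩ range(G_M)) ≤ min(n1, n4). -/
open Matrix Submodule Module

lemma shiftQ_pow_mulVec_eq_zero {q : ℕ} (k : ℕ) (v : Fin q → ZMod 2) (i : Fin q)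
    (hi : (i : ℕ) < k) : ((shiftQ q ^ k).mulVec v) i = 0 := by
  induction k generalizing v i with
  | zero => omega
  | succ k ih =>
    rw [pow_succ', ← Matrix.mulVec_mulVec]
    show ∑ j, shiftQ q i j * ((shiftQ q ^ k).mulVec v) j = 0
    refine Finset.sum_eq_zero fun j _ => ?_
    by_cases h : (i : ℕ) = (j : ℕ) + 1
    · rw [ih v j (by omega), mul_zero]
    · simp [shiftQ, h]

lemma range_shift_pow_mul_le {q k : ℕ} (B : Matrix (Fin q) (Fin q) (ZMod 2)) :
    LinearMap.range (shiftQ q ^ k * B).mulVecLin ≤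
      span (ZMod 2) (Set.range fun t : Fin (q - k) =>
        Pi.single (⟨k + t, by have := t.isLt; omega⟩ : Fin q) (1 : ZMod 2)) := by
  rintro v ⟨u, rfl⟩
  set w := (shiftQ q ^ k * B).mulVecLin u with hw
  have hv : ∀ i : Fin q, (i : ℕ) < k → w i = 0 := by
    intro i hi
    rw [hw, Matrix.mulVecLin_apply, ← Matrix.mulVec_mulVec]
    exact shiftQ_pow_mulVec_eq_zero k _ i hi
  have hsum : w = ∑ i : Fin q, Pi.single i (w i) := (Finset.univ_sum_single w).symm
  rw [hsum]
  refine Submodule.sum_mem _ fun i _ => ?_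
  by_cases hik : (i : ℕ) < k
  · rw [hv i hik, Pi.single_zero]; exact Submodule.zero_mem _
  · have h1 : Pi.single i (w i) = w i • (Pi.single i 1 : Fin q → ZMod 2) := by
      rw [← Pi.single_smul]; simp
    rw [h1]
    refine Submodule.smul_mem _ _ (Submodule.subset_span ?_)
    refine ⟨⟨(i : ℕ) - k, by have := i.isLt; omega⟩, ?_⟩
    have h2 : (⟨k + ((i : ℕ) - k), by have := i.isLt; omega⟩ : Fin q) = i := by
      ext; simp; omega
    exact congrArg (fun j : Fin q => Pi.single j (1 : ZMod 2)) h2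

lemma rank_shift_pow_mul_le {q : ℕ} (k : ℕ) (B : Matrix (Fin q) (Fin q) (ZMod 2)) :
    (shiftQ q ^ k * B).rank ≤ q - k := by
  have h1 := Submodule.finrank_mono (range_shift_pow_mul_le (k := k) B)
  refine h1.trans ?_
  refine (finrank_span_le_card _).trans ?_
  refine (Set.toFinset_card _).trans_le ?_
  refine (Fintype.card_range_le _).trans ?_
  simp

lemma finrank_sub_le_of_le {V : Type*} [AddCommGroup V] [Module (ZMod 2) V]
    [FiniteDimensional (ZMod 2) V]
    (S M T : Submodule (ZMod 2) V) (h : S ≤ M ⊔ T) :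
    finrank (ZMod 2) S - finrank (ZMod 2) ↥(S ⊓ M) ≤ finrank (ZMod 2) T := by
  have h1 := Submodule.finrank_sup_add_finrank_inf_eq S M
  have h2 : finrank (ZMod 2) ↥(S ⊔ M) ≤ finrank (ZMod 2) ↥(M ⊔ T) :=
    Submodule.finrank_mono (sup_le h le_sup_left)
  have h3 := Submodule.finrank_add_le_finrank_add_finrank M T
  have h4 : finrank (ZMod 2) M ≤ finrank (ZMod 2) ↥(S ⊔ M) :=
    Submodule.finrank_mono le_sup_right
  omega


/-- Case `n1 > n2`, `n3 ≥ n4`, `m ≥ n1`: upper bound on the achievable rate. -/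
theorem rate_upper_bound_case2
    (n1 n2 n3 n4 m q : ℕ) (hq : q = max n1 (max n2 (max n3 (max n4 m))))
    (h12 : n2 < n1) (h34 : n4 ≤ n3) (hm : n1 ≤ m)
    (GA GB : Matrix (Fin q) (Fin q) (ZMod 2)) :
    linRate q (GSmat q n1 n2 n3 n4 GA GB) (GMmat q n3 n4 m GA GB)
      ≤ min n1 n4 := by
  have hpm : shiftQ q ^ (q - m) * shiftQ q ^ (m - n1) = shiftQ q ^ (q - n1) := by
    rw [← pow_add]; congr 1; omega
  have h21 : shiftQ q ^ (q - n1) * shiftQ q ^ (n1 - n2) = shiftQ q ^ (q - n2) := by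
    rw [← pow_add]; congr 1; omega
  set D : Matrix (Fin q) (Fin q) (ZMod 2) :=
    (shiftQ q ^ (q - n4) * GB) * (shiftQ q ^ (q - n2) - shiftQ q ^ (q - n1)) with hD
  have key : ∀ A B X Y Z W : Matrix (Fin q) (Fin q) (ZMod 2), X * Y = Z →
      A * Z + B * W = (A * X + B * X) * Y + B * (W - Z) := by
    intro A B X Y Z W h; rw [← h]; noncomm_ring
  have hG : GSmat q n1 n2 n3 n4 GA GB
      = GMmat q n3 n4 m GA GB * shiftQ q ^ (m - n1) + D := by
    rw [hD]; unfold GSmat GMmat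
    exact key _ _ _ _ _ _ hpm
  have hrange : LinearMap.range (GSmat q n1 n2 n3 n4 GA GB).mulVecLin ≤
      LinearMap.range (GMmat q n3 n4 m GA GB).mulVecLin ⊔ LinearMap.range D.mulVecLin := by
    rw [hG]
    rintro v ⟨u, rfl⟩
    have hsplit : (GMmat q n3 n4 m GA GB * shiftQ q ^ (m - n1) + D).mulVecLin u
        = (GMmat q n3 n4 m GA GB).mulVecLin ((shiftQ q ^ (m - n1)).mulVecLin u)
          + D.mulVecLin u := by
      simp [Matrix.mulVecLin_add, Matrix.mulVecLin_mul]
    rw [hsplit]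
    exact Submodule.add_mem_sup ⟨_, rfl⟩ ⟨_, rfl⟩
  have hD4 : D.rank ≤ n4 := by
    have h' : D = shiftQ q ^ (q - n4) *
        (GB * (shiftQ q ^ (q - n2) - shiftQ q ^ (q - n1))) := by
      rw [hD, mul_assoc]
    rw [h']
    exact (rank_shift_pow_mul_le _ _).trans (by omega)
  have hD1 : D.rank ≤ n1 := by
    have hC : shiftQ q ^ (q - n2) - shiftQ q ^ (q - n1)
        = shiftQ q ^ (q - n1) * (shiftQ q ^ (n1 - n2) - 1) := by
      rw [mul_sub, mul_one, h21]
    calc D.rank ≤ (shiftQ q ^ (q - n2) - shiftQ q ^ (q - n1)).rank :=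
          Matrix.rank_mul_le_right _ _
      _ = (shiftQ q ^ (q - n1) * (shiftQ q ^ (n1 - n2) - 1)).rank := by rw [hC]
      _ ≤ q - (q - n1) := rank_shift_pow_mul_le _ _
      _ ≤ n1 := by omega
  have hmain := finrank_sub_le_of_le
    (LinearMap.range (GSmat q n1 n2 n3 n4 GA GB).mulVecLin)
    (LinearMap.range (GMmat q n3 n4 m GA GB).mulVecLin)
    (LinearMap.range D.mulVecLin) hrange
  exact hmain.trans (le_min hD1 hD4)
end

section
/- Let n1, n2, n3, n4, m be nonnegative integers with n1 > n2, n4 ≥ n3, and m ≤ n2; let q = max(n1, n2, n3, n4, m) and let Q be the q×q shift matrix over 𝔽₂. Then for every pair of q×q matrices G_A, G_B over 𝔽₂, with G_S = Q^{q−n3} G_A Q^{q−n1} + Q^{q−n4} G_B Q^{q−n2} and G_M = Q^{q−n3} G_A Q^{q−m} + Q^{q−n4} G_B Q^{q−m}, one has rank(G_S) − dim(range(G_S) ∩ range(G_M)) ≤ min(n1, n4, n2 + n3 − m). -/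
/-! The rate is `dim (range G_S ⊔ range G_M) - rank G_M`, so it is at most `rank G_S`, and
`G_S` factors through `Q^(q-n1)` on the right (as `n2 ≤ n1`) and through `Q^(q-n4)` on the left
(as `n3 ≤ n4`); this gives the bounds `n1` and `n4`.

For the third bound put `C = Q^(q-n3) G_A + Q^(q-n4) G_B`. Then `G_M = C Q^(q-n2) Q^(n2-m)` and
`G_S = C Q^(q-n2) + E` with `E = Q^(q-n3) G_A (Q^(q-n1) - Q^(q-n2))` of rank at most `n3`, so
`range G_S ⊔ range G_M` lies in `range (C Q^(q-n2)) ⊔ range E`. Since `Q^k (Q^k)ᵀ` is the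
identity except on the first `k` coordinates, right multiplication by `Q^(n2-m)` lowers the rank
by at most `n2 - m`, so `rank (C Q^(q-n2)) ≤ rank G_M + n2 - m`. -/

open Matrix Module

theorem Submodule.finrank_sub_finrank_inf_add_finrank_le {K V : Type*} [DivisionRing K]
    [AddCommGroup V] [Module K V] [FiniteDimensional K V] {S M A B : Submodule K V}
    (hS : S ≤ A ⊔ B) (hM : M ≤ A) :
    finrank K S - finrank K ↥(S ⊓ M) + finrank K M ≤ finrank K A + finrank K B := by
  have hsup : finrank K ↥(S ⊔ M) ≤ finrank K ↥(A ⊔ B) :=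
    Submodule.finrank_mono (sup_le hS (hM.trans le_sup_left))
  have := Submodule.finrank_mono (inf_le_left : S ⊓ M ≤ S)
  have := Submodule.finrank_sup_add_finrank_inf_eq S M
  have := Submodule.finrank_add_le_finrank_add_finrank A B
  omega

namespace Matrix

variable {K m n : Type*} [Field K] [Fintype n]

theorem rank_add_le (A B : Matrix m n K) : (A + B).rank ≤ A.rank + B.rank := by
  rw [rank, mulVecLin_add]
  exact (Submodule.finrank_mono (LinearMap.range_add_le _ _)).trans
    (Submodule.finrank_add_le_finrank_add_finrank _ _)

theorem rank_diagonal_ite [DecidableEq n] (p : n → Prop) [DecidablePred p] :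
    (diagonal fun i => if p i then (1 : K) else 0).rank = (Finset.univ.filter p).card := by
  classical
  rw [rank_diagonal, Fintype.card_subtype]
  congr 1
  ext i
  simp

end Matrix

lemma shiftQ_pow_apply (q k : ℕ) (i j : Fin q) :
    (shiftQ q ^ k) i j = if (i : ℕ) = j + k then 1 else 0 := by
  induction k generalizing i with
  | zero => simp [one_apply, Fin.ext_iff]
  | succ k ih =>
    rw [pow_succ', mul_apply]
    simp only [ih]
    simp only [shiftQ, of_apply, mul_ite, mul_one, mul_zero]
    rw [Fin.sum_univ_eq_sum_range (fun x => if x = (j : ℕ) + k then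
      (if (i : ℕ) = x + 1 then (1 : ZMod 2) else 0) else 0), Finset.sum_ite_eq']
    split_ifs <;> grind

section shift

variable (q : ℕ)

lemma shiftQ_pow_mul_diagonal (k : ℕ) :
    shiftQ q ^ k * diagonal (fun j : Fin q => if (j : ℕ) < q - k then 1 else 0) =
      shiftQ q ^ k := by
  ext i j
  rw [mul_diagonal, shiftQ_pow_apply]
  have := i.isLt
  split_ifs <;> first | rfl | omega

lemma rank_shiftQ_pow_le (k : ℕ) : (shiftQ q ^ k).rank ≤ q - k := by
  rw [← shiftQ_pow_mul_diagonal]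
  refine (rank_mul_le_right _ _).trans ?_
  rw [rank_diagonal_ite, Fin.card_filter_val_lt]
  exact min_le_right _ _

lemma rank_shiftQ_pow_sub_le (n : ℕ) : (shiftQ q ^ (q - n)).rank ≤ n :=
  (rank_shiftQ_pow_le q _).trans (by omega)

lemma shiftQ_pow_mul_transpose_add_diagonal (k : ℕ) :
    shiftQ q ^ k * (shiftQ q ^ k)ᵀ + diagonal (fun i : Fin q => if (i : ℕ) < k then 1 else 0) =
      1 := by
  ext i j
  rw [Matrix.add_apply, mul_apply, diagonal_apply, one_apply]
  simp only [transpose_apply, shiftQ_pow_apply, mul_ite, mul_one, mul_zero]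
  have hi := i.isLt
  by_cases hk : k ≤ (i : ℕ)
  · rw [Finset.sum_eq_single ⟨i - k, by omega⟩]
    · simp only [Fin.ext_iff]
      split_ifs <;> first | rfl | omega
    · intro x _ hx
      simp only [ne_eq, Fin.ext_iff] at hx
      split_ifs <;> first | rfl | omega
    · simp
  · rw [Finset.sum_eq_zero fun x _ => by split_ifs <;> first | rfl | omega]
    simp only [Fin.ext_iff]
    split_ifs <;> first | rfl | omega

lemma rank_le_rank_mul_shiftQ_pow {p : Type*} (X : Matrix p (Fin q) (ZMod 2)) (k : ℕ) :
    X.rank ≤ (X * shiftQ q ^ k).rank + k := by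
  set D := diagonal fun i : Fin q => if (i : ℕ) < k then (1 : ZMod 2) else 0
  have hX : X = X * shiftQ q ^ k * (shiftQ q ^ k)ᵀ + X * D := by
    rw [Matrix.mul_assoc, ← Matrix.mul_add, shiftQ_pow_mul_transpose_add_diagonal, Matrix.mul_one]
  have hD : D.rank ≤ k := by
    rw [rank_diagonal_ite, Fin.card_filter_val_lt]
    exact min_le_right _ _
  calc X.rank ≤ (X * shiftQ q ^ k * (shiftQ q ^ k)ᵀ).rank + (X * D).rank := by
        conv_lhs => rw [hX]
        exact rank_add_le _ _
    _ ≤ (X * shiftQ q ^ k).rank + k :=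
        add_le_add (rank_mul_le_left _ _) ((rank_mul_le_right _ _).trans hD)

end shift

lemma linRate_add_rank_le {q : ℕ} {GS GM A E R : Matrix (Fin q) (Fin q) (ZMod 2)}
    (hS : GS = A + E) (hM : GM = A * R) :
    linRate q GS GM + GM.rank ≤ A.rank + E.rank := by
  subst hS hM
  refine Submodule.finrank_sub_finrank_inf_add_finrank_le ?_ ?_
  · rw [mulVecLin_add]
    exact LinearMap.range_add_le _ _
  · rw [mulVecLin_mul]
    exact LinearMap.range_comp_le_range _ _

section transfer

variable {q n1 n2 n3 n4 m : ℕ} {GA GB : Matrix (Fin q) (Fin q) (ZMod 2)}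

lemma shiftQ_pow_sub_eq_mul {a b c : ℕ} (hcb : c ≤ b) (hba : b ≤ a) :
    shiftQ q ^ (a - c) = shiftQ q ^ (a - b) * shiftQ q ^ (b - c) := by
  rw [← pow_add]
  congr 1
  omega

lemma GSmat_eq_mul_shiftQ_pow (h21 : n2 ≤ n1) (h1 : n1 ≤ q) :
    GSmat q n1 n2 n3 n4 GA GB = (shiftQ q ^ (q - n3) * GA +
      shiftQ q ^ (q - n4) * GB * shiftQ q ^ (n1 - n2)) * shiftQ q ^ (q - n1) := by
  rw [GSmat, shiftQ_pow_sub_eq_mul h21 h1, pow_mul_comm (shiftQ q) (q - n1)]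
  simp only [Matrix.add_mul, Matrix.mul_assoc]

lemma GSmat_eq_shiftQ_pow_mul (h34 : n3 ≤ n4) (h4 : n4 ≤ q) :
    GSmat q n1 n2 n3 n4 GA GB = shiftQ q ^ (q - n4) * (shiftQ q ^ (n4 - n3) * GA *
      shiftQ q ^ (q - n1) + GB * shiftQ q ^ (q - n2)) := by
  rw [GSmat, shiftQ_pow_sub_eq_mul h34 h4]
  simp only [Matrix.mul_add, Matrix.mul_assoc]

lemma rank_GSmat_le_left (h21 : n2 ≤ n1) (h1 : n1 ≤ q) :
    (GSmat q n1 n2 n3 n4 GA GB).rank ≤ n1 := by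
  rw [GSmat_eq_mul_shiftQ_pow h21 h1]
  exact (rank_mul_le_right _ _).trans (rank_shiftQ_pow_sub_le q n1)

lemma rank_GSmat_le_right (h34 : n3 ≤ n4) (h4 : n4 ≤ q) :
    (GSmat q n1 n2 n3 n4 GA GB).rank ≤ n4 := by
  rw [GSmat_eq_shiftQ_pow_mul h34 h4]
  exact (rank_mul_le_left _ _).trans (rank_shiftQ_pow_sub_le q n4)

lemma GSmat_eq_add {C : Matrix (Fin q) (Fin q) (ZMod 2)}
    (hC : C = shiftQ q ^ (q - n3) * GA + shiftQ q ^ (q - n4) * GB) :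
    GSmat q n1 n2 n3 n4 GA GB = C * shiftQ q ^ (q - n2) +
      shiftQ q ^ (q - n3) * (GA * (shiftQ q ^ (q - n1) - shiftQ q ^ (q - n2))) := by
  rw [GSmat, hC]
  simp only [Matrix.add_mul, Matrix.mul_sub, Matrix.mul_assoc]
  abel

lemma GMmat_eq_mul (hm : m ≤ n2) (h2 : n2 ≤ q) {C : Matrix (Fin q) (Fin q) (ZMod 2)}
    (hC : C = shiftQ q ^ (q - n3) * GA + shiftQ q ^ (q - n4) * GB) :
    GMmat q n3 n4 m GA GB = C * shiftQ q ^ (q - n2) * shiftQ q ^ (n2 - m) := by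
  rw [GMmat, hC, shiftQ_pow_sub_eq_mul hm h2]
  simp only [Matrix.add_mul, Matrix.mul_assoc]

lemma linRate_GSmat_GMmat_le (hm : m ≤ n2) (h2 : n2 ≤ q) :
    linRate q (GSmat q n1 n2 n3 n4 GA GB) (GMmat q n3 n4 m GA GB) ≤ n2 + n3 - m := by
  set C := shiftQ q ^ (q - n3) * GA + shiftQ q ^ (q - n4) * GB with hC
  have hrate := linRate_add_rank_le (GSmat_eq_add (n1 := n1) (n2 := n2) hC)
    (GMmat_eq_mul hm h2 hC)
  have hGM := rank_le_rank_mul_shiftQ_pow q (C * shiftQ q ^ (q - n2)) (n2 - m)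
  rw [← GMmat_eq_mul hm h2 hC] at hGM
  have hE := (rank_mul_le_left (shiftQ q ^ (q - n3))
    (GA * (shiftQ q ^ (q - n1) - shiftQ q ^ (q - n2)))).trans (rank_shiftQ_pow_sub_le q n3)
  omega

end transfer

/-- Case `n1 > n2`, `n4 ≥ n3`, `m ≤ n2`: upper bound on the achievable rate. -/
theorem rate_upper_bound_case3
    (n1 n2 n3 n4 m q : ℕ) (hq : q = max n1 (max n2 (max n3 (max n4 m))))
    (h12 : n2 < n1) (h34 : n3 ≤ n4) (hm : m ≤ n2)
    (GA GB : Matrix (Fin q) (Fin q) (ZMod 2)) :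
    linRate q (GSmat q n1 n2 n3 n4 GA GB) (GMmat q n3 n4 m GA GB)
      ≤ min n1 (min n4 (n2 + n3 - m)) := by
  have hrank : linRate q (GSmat q n1 n2 n3 n4 GA GB) (GMmat q n3 n4 m GA GB) ≤
      (GSmat q n1 n2 n3 n4 GA GB).rank := Nat.sub_le _ _
  refine le_min ?_ (le_min ?_ ?_)
  · exact hrank.trans (rank_GSmat_le_left h12.le (by omega))
  · exact hrank.trans (rank_GSmat_le_right h34 (by omega))
  · exact linRate_GSmat_GMmat_le hm (by omega)
end

section
/- Let n1, n2, n3, n4, m be nonnegative integers with n1 = n2 and m ≥ n1; let q = max(n1, n2, n3, n4, m) and let Q be the q×q shift matrix over 𝔽₂. Then for every pair of q×q matrices G_A, G_B over 𝔽₂, with G_S = Q^{q−n3} G_A Q^{q−n1} + Q^{q−n4} G_B Q^{q−n2} and G_M = Q^{q−n3} G_A Q^{q−m} + Q^{q−n4} G_B Q^{q−m}, one has rank(G_S) − dim(range(G_S) ∩ range(G_M)) = 0. -/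
/-!
Since `n1 ≤ m`, both source-side shifts `Q^(q-n1)` factor through the common interference
shift `Q^(q-m)`, so `G_S = G_M Q^k` with `k = (q-n1) - (q-m)`. Hence every signal the
destination can receive from the sources is also reachable through the disturbing link:
`range G_S ⊆ range G_M`, and the rate `rank G_S - dim (range G_S ∩ range G_M)` vanishes.
-/

theorem Matrix.range_mulVecLin_mul_le {R l m n : Type*} [CommSemiring R] [Fintype m] [Fintype n]
    (A : Matrix l m R) (B : Matrix m n R) :
    LinearMap.range (A * B).mulVecLin ≤ LinearMap.range A.mulVecLin := by
  rw [Matrix.mulVecLin_mul]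
  exact LinearMap.range_comp_le_range _ _

theorem linRate_eq_zero_of_range_le {q : ℕ} {GS GM : Matrix (Fin q) (Fin q) (ZMod 2)}
    (h : LinearMap.range GS.mulVecLin ≤ LinearMap.range GM.mulVecLin) :
    linRate q GS GM = 0 := by
  rw [linRate, inf_eq_left.mpr h, Matrix.rank, Nat.sub_self]

theorem GSmat_eq_GMmat_mul_shiftQ_pow (q n n3 n4 m : ℕ) (hm : n ≤ m)
    (GA GB : Matrix (Fin q) (Fin q) (ZMod 2)) :
    GSmat q n n n3 n4 GA GB =
      GMmat q n3 n4 m GA GB * shiftQ q ^ ((q - n) - (q - m)) := by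
  have hpow : shiftQ q ^ (q - n) = shiftQ q ^ (q - m) * shiftQ q ^ ((q - n) - (q - m)) := by
    rw [← pow_add, Nat.add_sub_cancel' (Nat.sub_le_sub_left hm q)]
  simp only [GSmat, GMmat, hpow, add_mul, mul_assoc]

theorem rate_zero_case5_general
    (n1 n2 n3 n4 m q : ℕ)
    (h12 : n1 = n2) (hm : n1 ≤ m)
    (GA GB : Matrix (Fin q) (Fin q) (ZMod 2)) :
    linRate q (GSmat q n1 n2 n3 n4 GA GB) (GMmat q n3 n4 m GA GB) = 0 := by
  subst h12
  apply linRate_eq_zero_of_range_le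
  rw [GSmat_eq_GMmat_mul_shiftQ_pow q n1 n3 n4 m hm GA GB]
  exact Matrix.range_mulVecLin_mul_le _ _

/-- Case `n1 = n2`, `m ≥ n1`: the achievable rate of every linear scheme is `0`. -/
theorem rate_zero_case5
    (n1 n2 n3 n4 m q : ℕ) (hq : q = max n1 (max n2 (max n3 (max n4 m))))
    (h12 : n1 = n2) (hm : n1 ≤ m)
    (GA GB : Matrix (Fin q) (Fin q) (ZMod 2)) :
    linRate q (GSmat q n1 n2 n3 n4 GA GB) (GMmat q n3 n4 m GA GB) = 0 :=
  rate_zero_case5_general n1 n2 n3 n4 m q h12 hm GA GB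
end

section
/- Let n1, n2, n3, n4, m be nonnegative integers with n1 = n2 and m < n1; let q = max(n1, n2, n3, n4, m) and let Q be the q×q shift matrix over 𝔽₂. Then for every pair of q×q matrices G_A, G_B over 𝔽₂, with G_S = Q^{q−n3} G_A Q^{q−n1} + Q^{q−n4} G_B Q^{q−n2} and G_M = Q^{q−n3} G_A Q^{q−m} + Q^{q−n4} G_B Q^{q−m}, the column space of G_M is contained in the column space of G_S, and rank(G_S) − dim(range(G_S) ∩ range(G_M)) = rank(G_S) − rank(G_M) ≤ min(n1 − m, max(n3, n4)). -/
-- vectors vanishing on coordinates < k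
def lowW (q k : ℕ) : Submodule (ZMod 2) (Fin q → ZMod 2) where
  carrier := {v | ∀ i : Fin q, (i : ℕ) < k → v i = 0}
  add_mem' := by intro a b ha hb i hi; simp [ha i hi, hb i hi]
  zero_mem' := by intro i hi; rfl
  smul_mem' := by intro c a ha i hi; simp [ha i hi]

lemma lowW_antitone {q k k' : ℕ} (h : k' ≤ k) : lowW q k ≤ lowW q k' := by
  intro v hv i hi; exact hv i (lt_of_lt_of_le hi h)

def lowEquiv (q k : ℕ) : {i : Fin q // k ≤ (i : ℕ)} ≃ Fin (q - k) where
  toFun x := ⟨(x : Fin q) - k, by have h1 := x.1.isLt; have h2 := x.2; omega⟩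
  invFun j := ⟨⟨(j : ℕ) + k, by have := j.isLt; omega⟩, by simp⟩
  left_inv x := by
    have h2 := x.2
    apply Subtype.ext; apply Fin.ext; simp; omega
  right_inv j := by apply Fin.ext; simp

lemma finrank_lowW_le (q k : ℕ) :
    Module.finrank (ZMod 2) (lowW q k) ≤ q - k := by
  classical
  let e : lowW q k →ₗ[ZMod 2] ({i : Fin q // k ≤ (i : ℕ)} → ZMod 2) :=
    (LinearMap.funLeft (ZMod 2) (ZMod 2) Subtype.val).comp (lowW q k).subtype
  have hinj : Function.Injective e := by
    intro v w h
    apply Subtype.ext; funext i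
    by_cases hi : (i : ℕ) < k
    · rw [v.2 i hi, w.2 i hi]
    · exact congrFun h ⟨i, le_of_not_gt hi⟩
  calc Module.finrank (ZMod 2) (lowW q k)
      ≤ Module.finrank (ZMod 2) ({i : Fin q // k ≤ (i : ℕ)} → ZMod 2) :=
        LinearMap.finrank_le_finrank_of_injective hinj
    _ = Fintype.card {i : Fin q // k ≤ (i : ℕ)} := Module.finrank_pi _
    _ = q - k := by rw [Fintype.card_congr (lowEquiv q k), Fintype.card_fin]

lemma shift_mulVec_eq {q : ℕ} (w : Fin q → ZMod 2) (i j : Fin q)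
    (hij : (i : ℕ) = (j : ℕ) + 1) : (shiftQ q).mulVec w i = w j := by
  classical
  simp only [Matrix.mulVec, dotProduct, shiftQ, Matrix.of_apply]
  rw [Finset.sum_eq_single j]
  · simp [hij]
  · intro l _ hl
    have : (i : ℕ) ≠ (l : ℕ) + 1 := by
      intro h; exact hl (Fin.ext (by omega))
    simp [this]
  · simp

lemma shift_mulVec_zero {q : ℕ} (w : Fin q → ZMod 2) (i : Fin q)
    (hi : (i : ℕ) = 0) : (shiftQ q).mulVec w i = 0 := by
  simp only [Matrix.mulVec, dotProduct, shiftQ, Matrix.of_apply]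
  apply Finset.sum_eq_zero
  intro l _
  have : (i : ℕ) ≠ (l : ℕ) + 1 := by omega
  simp [this]

lemma shift_pow_mulVec_mem (q k : ℕ) (v : Fin q → ZMod 2) :
    (shiftQ q ^ k).mulVec v ∈ lowW q k := by
  induction k with
  | zero => intro i hi; omega
  | succ k ih =>
    rw [pow_succ']
    intro i hi
    rw [← Matrix.mulVec_mulVec]
    rcases Nat.eq_zero_or_pos (i : ℕ) with h0 | h0
    · exact shift_mulVec_zero _ i h0
    · have hlt : (i : ℕ) - 1 < q := by have := i.isLt; omega
      rw [shift_mulVec_eq _ i ⟨(i : ℕ) - 1, hlt⟩ (by simp; omega)]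
      exact ih ⟨(i : ℕ) - 1, hlt⟩ (by simp; omega)

lemma shift_pow_mulVec_apply (q k : ℕ) (v : Fin q → ZMod 2) (i j : Fin q)
    (hij : (i : ℕ) = (j : ℕ) + k) : (shiftQ q ^ k).mulVec v i = v j := by
  induction k generalizing i j with
  | zero =>
    have : i = j := Fin.ext (by omega)
    subst this
    simp
  | succ k ih =>
    rw [pow_succ']
    rw [← Matrix.mulVec_mulVec]
    have hlt : (i : ℕ) - 1 < q := by have := i.isLt; omega
    rw [shift_mulVec_eq _ i ⟨(i : ℕ) - 1, hlt⟩ (by simp; omega)]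
    exact ih ⟨(i : ℕ) - 1, hlt⟩ j (by simp; omega)

-- nullity of shift power
lemma ker_shift_pow_le (q k : ℕ) :
    LinearMap.ker (shiftQ q ^ k).mulVecLin ≤ lowW q (q - k) := by
  intro v hv j hj
  have hlt : (j : ℕ) + k < q := by omega
  have := congrFun (LinearMap.mem_ker.mp hv) ⟨(j : ℕ) + k, hlt⟩
  rw [Matrix.mulVecLin_apply] at this
  rw [← shift_pow_mulVec_apply q k v ⟨(j : ℕ) + k, hlt⟩ j (by simp)]
  exact this

/-- Case `n1 = n2`, `m < n1`: the column space of `G_M` is contained in that of `G_S`,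
the achievable rate equals `rank G_S - rank G_M`, and is at most
`min (n1 - m) (max n3 n4)`. -/
theorem rate_upper_bound_case6
    (n1 n2 n3 n4 m q : ℕ) (hq : q = max n1 (max n2 (max n3 (max n4 m))))
    (h12 : n1 = n2) (hm : m < n1)
    (GA GB : Matrix (Fin q) (Fin q) (ZMod 2)) :
    LinearMap.range (GMmat q n3 n4 m GA GB).mulVecLin
        ≤ LinearMap.range (GSmat q n1 n2 n3 n4 GA GB).mulVecLin ∧
    linRate q (GSmat q n1 n2 n3 n4 GA GB) (GMmat q n3 n4 m GA GB)
        = (GSmat q n1 n2 n3 n4 GA GB).rank - (GMmat q n3 n4 m GA GB).rank ∧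
    (GSmat q n1 n2 n3 n4 GA GB).rank - (GMmat q n3 n4 m GA GB).rank
        ≤ min (n1 - m) (max n3 n4) := by
  subst h12
  have hn1q : n1 ≤ q := by omega
  have hn3q : n3 ≤ q := by omega
  have hn4q : n4 ≤ q := by omega
  set GS := GSmat q n1 n1 n3 n4 GA GB with hGS
  set GM := GMmat q n3 n4 m GA GB with hGM
  -- key factorization
  have key : GM = GS * shiftQ q ^ (n1 - m) := by
    have he : q - n1 + (n1 - m) = q - m := by omega
    simp only [hGS, hGM, GSmat, GMmat, add_mul, mul_assoc, ← pow_add, he]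
  have hcomp : GM.mulVecLin
      = GS.mulVecLin ∘ₗ (shiftQ q ^ (n1 - m)).mulVecLin := by
    rw [key, Matrix.mulVecLin_mul]
  have hle : LinearMap.range GM.mulVecLin ≤ LinearMap.range GS.mulVecLin := by
    rw [hcomp]; exact LinearMap.range_comp_le_range _ _
  refine ⟨hle, ?_, ?_⟩
  · rw [linRate, inf_eq_right.mpr hle]; rfl
  · apply le_min
    · -- rank GS ≤ rank GM + (n1 - m)
      have hkq : n1 - m ≤ q := by omega
      set g := (shiftQ q ^ (n1 - m)).mulVecLin with hg
      obtain ⟨C, hC⟩ := Submodule.exists_isCompl (LinearMap.range g)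
      have hker : Module.finrank (ZMod 2) (LinearMap.ker g) ≤ n1 - m := by
        calc Module.finrank (ZMod 2) (LinearMap.ker g)
            ≤ Module.finrank (ZMod 2) (lowW q (q - (n1 - m))) :=
              Submodule.finrank_mono (ker_shift_pow_le q (n1 - m))
          _ ≤ q - (q - (n1 - m)) := finrank_lowW_le _ _
          _ ≤ n1 - m := by omega
      have hrn := LinearMap.finrank_range_add_finrank_ker g
      have hpi : Module.finrank (ZMod 2) (Fin q → ZMod 2) = q := by
        rw [Module.finrank_pi, Fintype.card_fin]
      have hcompl := Submodule.finrank_add_eq_of_isCompl hC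
      have hCle : Module.finrank (ZMod 2) C ≤ n1 - m := by omega
      have hmap : Submodule.map GS.mulVecLin (LinearMap.range g)
          = LinearMap.range GM.mulVecLin := by
        rw [hcomp, LinearMap.range_comp]
      have hrange : LinearMap.range GS.mulVecLin
          = Submodule.map GS.mulVecLin (LinearMap.range g)
              ⊔ Submodule.map GS.mulVecLin C := by
        rw [← Submodule.map_sup, hC.codisjoint.eq_top, Submodule.map_top]
      have hs := Submodule.finrank_sup_add_finrank_inf_eq
        (Submodule.map GS.mulVecLin (LinearMap.range g))
        (Submodule.map GS.mulVecLin C)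
      have hmle := Submodule.finrank_map_le GS.mulVecLin C
      have : GS.rank ≤ GM.rank + (n1 - m) := by
        rw [Matrix.rank, Matrix.rank, ← hmap, hrange]
        omega
      omega
    · -- rank GS ≤ max n3 n4
      have hr : LinearMap.range GS.mulVecLin ≤ lowW q (q - max n3 n4) := by
        rintro _ ⟨v, rfl⟩
        rw [Matrix.mulVecLin_apply, hGS, GSmat, Matrix.add_mulVec]
        simp only [mul_assoc, ← Matrix.mulVec_mulVec]
        exact Submodule.add_mem _
          (lowW_antitone (by omega) (shift_pow_mulVec_mem q (q - n3) _))
          (lowW_antitone (by omega) (shift_pow_mulVec_mem q (q - n4) _))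
      have : GS.rank ≤ max n3 n4 := by
        calc GS.rank ≤ Module.finrank (ZMod 2) (lowW q (q - max n3 n4)) :=
              Submodule.finrank_mono hr
          _ ≤ q - (q - max n3 n4) := finrank_lowW_le _ _
          _ ≤ max n3 n4 := by omega
      omega
end
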